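/- Let K ≥ 1 and let p, q : Fin K → ℝ be discrete probability distributions (i.e., pᵢ ≥ 0, qᵢ ≥ 0 for all i, and Σᵢ pᵢ = 1, Σᵢ qᵢ = 1). Define the total variation divergence D_TV(p‖q) = (1/2) Σᵢ |pᵢ − qᵢ|, and for a fixed index l define the point probability distance D_pp(p‖q) = (p_l − q_l)². Then D_TV(p‖q)² ≥ D_pp(p‖q). -/
import Mathlib

theorem tv_sq_ge_pp (K : ℕ) (hK : 1 ≤ K) (p q : Fin K → ℝ)
    (hp : ∀ i, 0 ≤ p i) (hq : ∀ i, 0 ≤ q i)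
    (hps : ∑ i, p i = 1) (hqs : ∑ i, q i = 1) (l : Fin K) :
    ((1 / 2) * ∑ i, |p i - q i|) ^ 2 ≥ (p l - q l) ^ 2 := by
  have hsum : ∑ i, (p i - q i) = 0 := by
    rw [Finset.sum_sub_distrib, hps, hqs]; ring
  have hrest : ∑ i ∈ Finset.univ.erase l, (p i - q i) = -(p l - q l) := by
    have := Finset.add_sum_erase Finset.univ (fun i => p i - q i) (Finset.mem_univ l)
    linarith [hsum, this]
  have h1 : |p l - q l| ≤ ∑ i ∈ Finset.univ.erase l, |p i - q i| := by
    calc |p l - q l| = |∑ i ∈ Finset.univ.erase l, (p i - q i)| := by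
          rw [hrest, abs_neg]
      _ ≤ _ := Finset.abs_sum_le_sum_abs _ _
  have h2 : 2 * |p l - q l| ≤ ∑ i, |p i - q i| := by
    have := Finset.add_sum_erase Finset.univ (fun i => |p i - q i|) (Finset.mem_univ l)
    linarith
  have h3 : |p l - q l| ≤ (1 / 2) * ∑ i, |p i - q i| := by linarith
  have h4 : 0 ≤ |p l - q l| := abs_nonneg _
  calc (p l - q l) ^ 2 = |p l - q l| ^ 2 := (sq_abs _).symm
    _ ≤ ((1 / 2) * ∑ i, |p i - q i|) ^ 2 := by
        apply pow_le_pow_left₀ h4 h3
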